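/- Every quasi-superstable divisor c on G satisfies Σ_{v ∈ V} c(v) ≤ |E| - |V| (equivalently, deg(c) ≤ g - 1 where g = |E| - |V| + 1 is the genus of G), with equality if and only if c is maximal with respect to the coordinatewise order among quasi-superstable divisors. -/

import Mathlib

namespace Soap

variable {V : Type*} {W : Type*}

/-- A partial orientation of `G`: a relation `O` such that `O u v` implies `{u,v}` is an
edge and the reverse pair is not in `O`. -/
def IsPartialOrientation (G : SimpleGraph V) (O : V → V → Prop) : Prop :=
  ∀ u v, O u v → G.Adj u v ∧ ¬ O v u

/-- The edge `{u,v}` of `G` is blank for the partial orientation `O`. -/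
def IsBlank (G : SimpleGraph V) (O : V → V → Prop) (u v : V) : Prop :=
  G.Adj u v ∧ ¬ O u v ∧ ¬ O v u

/-- A `G`-semiorientation: a partial orientation such that every potential cycle
(a cycle of `G`, here traversed as `c : ZMod n → V`, none of whose edges is oriented
against the traversal) has strictly more blank edges than oriented edges. -/
def IsSemiorientation (G : SimpleGraph V) (O : V → V → Prop) : Prop :=
  IsPartialOrientation G O ∧
  ∀ (n : ℕ) (c : ZMod n → V), 3 ≤ n → Function.Injective c →
    (∀ i, G.Adj (c i) (c (i + 1))) →
    (∀ i, ¬ O (c (i + 1)) (c i)) →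
    {i : ZMod n | O (c i) (c (i + 1))}.ncard <
      {i : ZMod n | IsBlank G O (c i) (c (i + 1))}.ncard

/-- A semiorder (unit interval order) given by its strict order relation `lt`. -/
def IsSemiorder (lt : V → V → Prop) : Prop :=
  ∃ t : V → ℝ, ∀ u v, lt u v ↔ t u + 1 < t v

/-- Compatibility of a (semi)order `lt` and a partial orientation `O`:
for every edge `{u,v}`, `u < v` iff `(u,v) ∈ O`. -/
def Compatible (G : SimpleGraph V) (lt : V → V → Prop) (O : V → V → Prop) : Prop :=
  ∀ u v, G.Adj u v → (lt u v ↔ O u v)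

/-- Indegree of a vertex with respect to a partial orientation. -/
noncomputable def indeg (O : V → V → Prop) (v : V) : ℕ := {u | O u v}.ncard

/-- `n_P(v)`: the number of vertices `u` with `u < v` and `{u,v}` an edge of `G`. -/
noncomputable def nP (G : SimpleGraph V) (lt : V → V → Prop) (v : V) : ℕ :=
  {u | lt u v ∧ G.Adj u v}.ncard

/-- Degree of a vertex in a graph. -/
noncomputable def vdeg (H : SimpleGraph W) (v : W) : ℕ := {u | H.Adj v u}.ncard

/-- A configuration `c` on the graph `H` with sink `q` is superstable:
`c ≥ 0` off the sink, and no nonempty set `X` of nonsink vertices can be fired legally,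
i.e. `c - Δ̃·1_X ≥ 0` fails (coordinatewise off the sink), where
`(Δ̃·1_X)_v = deg(v)·1_X(v) - #{u ∈ X : u ∼ v}`. -/
def Superstable (H : SimpleGraph W) (q : W) (c : W → ℤ) : Prop :=
  (∀ v, v ≠ q → 0 ≤ c v) ∧
  ¬ ∃ X : Set W, X.Nonempty ∧ q ∉ X ∧
    ∀ v, v ≠ q →
      0 ≤ c v - X.indicator (fun u => (vdeg H u : ℤ)) v + ({u | u ∈ X ∧ H.Adj v u}.ncard : ℤ)

/-- `K(G)`: the graph `G` with a new vertex `none` adjoined, joined to every vertex of `G`. -/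
def KG (G : SimpleGraph V) : SimpleGraph (Option V) where
  Adj x y := x ≠ y ∧ ∀ u v, x = some u → y = some v → G.Adj u v
  symm := ⟨by
    rintro x y ⟨hne, h⟩
    exact ⟨hne.symm, fun u v hu hv => (h v u hv hu).symm⟩⟩
  loopless := ⟨by rintro x ⟨hne, -⟩; exact hne rfl⟩

/-- A divisor `c : V → ℤ` on `G` is quasi-superstable if the configuration
`v ↦ c v + 1` on `K(G)` (with sink the new vertex) is superstable. -/
def QuasiSuperstable (G : SimpleGraph V) (c : V → ℤ) : Prop :=
  Superstable (KG G) none (fun x => x.elim 0 (fun v => c v + 1))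

/-- An acyclic orientation of `G`: a partial orientation in which every edge is
oriented and which contains no directed cycle. -/
def IsAcyclicOrientation (G : SimpleGraph V) (O : V → V → Prop) : Prop :=
  IsPartialOrientation G O ∧ (∀ u v, G.Adj u v → O u v ∨ O v u) ∧
  ¬ ∃ (n : ℕ) (c : ZMod n → V), 0 < n ∧ Function.Injective c ∧ ∀ i, O (c i) (c (i + 1))

/-- The union of the hyperplanes `x u - x v = 1` of the `G`-semiorder arrangement. -/
def hyperplanesUnion (G : SimpleGraph V) : Set (V → ℝ) :=
  {x | ∃ u v, G.Adj u v ∧ x u - x v = 1}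

/-- The regions of the `G`-semiorder arrangement: connected components of the
complement of the union of its hyperplanes. -/
def Regions (G : SimpleGraph V) : Set (Set (V → ℝ)) :=
  {r | ∃ x, x ∉ hyperplanesUnion G ∧ r = connectedComponentIn (hyperplanesUnion G)ᶜ x}

/-- The candidate region attached to a partial orientation `O`. -/
def rho (G : SimpleGraph V) (O : V → V → Prop) : Set (V → ℝ) :=
  {x | (∀ u v, O u v → x v - x u > 1) ∧ (∀ u v, IsBlank G O u v → |x u - x v| < 1)}

/-- `K(G)₀`: the graph `G` with an edge `{v, v₀}` added for each vertex `v ≠ v₀`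
not already adjacent to `v₀`. -/
def KG0 (G : SimpleGraph V) (v₀ : V) : SimpleGraph V where
  Adj u v := G.Adj u v ∨ (u ≠ v ∧ (u = v₀ ∨ v = v₀))
  symm := ⟨by
    rintro u v (h | ⟨hne, h⟩)
    · exact Or.inl h.symm
    · exact Or.inr ⟨hne.symm, h.symm⟩⟩
  loopless := ⟨by
    rintro v (h | ⟨hne, -⟩)
    · exact G.irrefl h
    · exact hne rfl⟩

/-- The union of the hyperplanes of the `(G,v₀)`-semiorder arrangement. -/
def hyperplanesUnion0 (G : SimpleGraph V) (v₀ : V) : Set ({v : V // v ≠ v₀} → ℝ) :=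
  {x | ∃ u v : {v : V // v ≠ v₀}, G.Adj u.1 v.1 ∧ x u - x v = 1}

/-- The regions of the `(G,v₀)`-semiorder arrangement. -/
def Regions0 (G : SimpleGraph V) (v₀ : V) : Set (Set ({v : V // v ≠ v₀} → ℝ)) :=
  {r | ∃ x, x ∉ hyperplanesUnion0 G v₀ ∧
    r = connectedComponentIn (hyperplanesUnion0 G v₀)ᶜ x}

/-- The candidate region attached to a partial orientation `O`, in the sink context. -/
def rho0 (G : SimpleGraph V) (v₀ : V) (O : V → V → Prop) :
    Set ({v : V // v ≠ v₀} → ℝ) :=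
  {x | (∀ u v : {v : V // v ≠ v₀}, O u.1 v.1 → x v - x u > 1) ∧
    (∀ u v : {v : V // v ≠ v₀}, IsBlank G O u.1 v.1 → |x u - x v| < 1)}

open scoped Classical
open Finset

section Aux
variable [Fintype W]

lemma ncard_eq_filter (p : W → Prop) : {u | p u}.ncard = (Finset.univ.filter p).card := by
  rw [Set.ncard_eq_toFinset_card', Set.toFinset_setOf]

noncomputable def outc (H : SimpleGraph W) (Y : Finset W) (v : W) : ℕ :=
  (Finset.univ.filter (fun u => u ∉ Y ∧ H.Adj v u)).card

lemma vdeg_split (H : SimpleGraph W) (Y : Finset W) (v : W) :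
    vdeg H v = (Finset.univ.filter (fun u => u ∈ Y ∧ H.Adj v u)).card + outc H Y v := by
  rw [vdeg, ncard_eq_filter, outc, ← Finset.card_union_of_disjoint]
  · congr 1
    ext u
    simp only [Finset.mem_filter, Finset.mem_union, Finset.mem_univ, true_and]
    tauto
  · rw [Finset.disjoint_left]
    rintro u hu hu'
    simp only [Finset.mem_filter] at hu hu'
    exact hu'.2.1 hu.2.1

lemma superstable_iff (H : SimpleGraph W) (q : W) (s : W → ℤ) :
    Superstable H q s ↔ ((∀ v, v ≠ q → 0 ≤ s v) ∧
      ∀ Y : Finset W, Y.Nonempty → q ∉ Y → ∃ v ∈ Y, s v + 1 ≤ outc H Y v) := by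
  constructor
  · rintro ⟨hnn, hns⟩
    refine ⟨hnn, fun Y hYne hqY => ?_⟩
    by_contra hcon
    push_neg at hcon
    apply hns
    refine ⟨(Y : Set W), by simpa using hYne, by simpa using hqY, fun v hv => ?_⟩
    have hcard : ({u | u ∈ (Y : Set W) ∧ H.Adj v u}.ncard : ℤ)
        = ((Finset.univ.filter (fun u => u ∈ Y ∧ H.Adj v u)).card : ℤ) := by
      rw [ncard_eq_filter]; norm_num
    by_cases hvY : v ∈ Y
    · have h1 := hcon v hvY
      rw [Set.indicator_of_mem (by simpa using hvY), hcard]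
      have h2 : (vdeg H v : ℤ) = ((Finset.univ.filter (fun u => u ∈ Y ∧ H.Adj v u)).card : ℤ)
          + (outc H Y v : ℤ) := by exact_mod_cast vdeg_split H Y v
      omega
    · rw [Set.indicator_of_notMem (by simpa using hvY)]
      have h0 := hnn v hv
      have h1 : (0:ℤ) ≤ ({u | u ∈ (Y:Set W) ∧ H.Adj v u}.ncard : ℤ) := Int.natCast_nonneg _
      omega
  · rintro ⟨hnn, hP⟩
    refine ⟨hnn, ?_⟩
    rintro ⟨X, hXne, hqX, hfire⟩
    obtain ⟨v, hvY, hv⟩ := hP X.toFinset (by simpa using hXne) (by simpa using hqX)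
    rw [Set.mem_toFinset] at hvY
    have hvq : v ≠ q := fun h => hqX (h ▸ hvY)
    have h1 := hfire v hvq
    rw [Set.indicator_of_mem hvY] at h1
    have hcard : ({u | u ∈ X ∧ H.Adj v u}.ncard : ℤ)
        = ((Finset.univ.filter (fun u => u ∈ X.toFinset ∧ H.Adj v u)).card : ℤ) := by
      rw [ncard_eq_filter]
      norm_cast
      congr 1
      ext u
      simp [Set.mem_toFinset]
    have h2 : (vdeg H v : ℤ) = ((Finset.univ.filter (fun u => u ∈ X.toFinset ∧ H.Adj v u)).card : ℤ)
        + (outc H X.toFinset v : ℤ) := by exact_mod_cast vdeg_split H X.toFinset v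
    omega


noncomputable def inc (H : SimpleGraph W) (X : Finset W) : ℕ :=
  (H.edgeFinset.filter (fun e => ∃ v ∈ X, v ∈ e)).card

lemma outc_mono (H : SimpleGraph W) {Y X : Finset W} (h : Y ⊆ X) (v : W) :
    outc H X v ≤ outc H Y v := by
  apply Finset.card_le_card
  intro u hu
  simp only [mem_filter, mem_univ, true_and] at hu ⊢
  exact ⟨fun hu' => hu.1 (h hu'), hu.2⟩

lemma inc_erase (H : SimpleGraph W) {X : Finset W} {v : W} (hv : v ∈ X) :
    inc H X = inc H (X.erase v) + outc H X v := by
  have hB : (H.edgeFinset.filter (fun e => ∃ w ∈ X, w ∈ e))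
      = (H.edgeFinset.filter (fun e => ∃ w ∈ X.erase v, w ∈ e)) ∪
        ((Finset.univ.filter (fun u => u ∉ X ∧ H.Adj v u)).image (fun u => s(v, u))) := by
    ext e
    induction e using Sym2.ind with
    | _ a b =>
      simp only [mem_filter, mem_union, mem_image, mem_univ, true_and,
        SimpleGraph.mem_edgeFinset, SimpleGraph.mem_edgeSet, Sym2.mem_iff, mem_erase]
      constructor
      · rintro ⟨hab, w, hwX, hw⟩
        by_cases hA : (a ≠ v ∧ a ∈ X) ∨ (b ≠ v ∧ b ∈ X)
        · rcases hA with h | h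
          · exact Or.inl ⟨hab, a, h, Or.inl rfl⟩
          · exact Or.inl ⟨hab, b, h, Or.inr rfl⟩
        · push_neg at hA
          rcases hw with rfl | rfl
          · have hav : w = v := by by_contra h; exact (hA.1 h) hwX
            subst hav
            exact Or.inr ⟨b, ⟨hA.2 hab.ne', hab⟩, rfl⟩
          · have hbv : w = v := by by_contra h; exact (hA.2 h) hwX
            subst hbv
            exact Or.inr ⟨a, ⟨hA.1 hab.ne, hab.symm⟩, Sym2.eq_swap⟩
      · rintro (⟨hab, w, hw, hmem⟩ | ⟨u, ⟨huX, hadj⟩, hue⟩)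
        · exact ⟨hab, w, hw.2, hmem⟩
        · rcases Sym2.eq_iff.mp hue with ⟨rfl, rfl⟩ | ⟨rfl, rfl⟩
          · exact ⟨hadj, v, hv, Or.inl rfl⟩
          · exact ⟨hadj.symm, v, hv, Or.inr rfl⟩
  have hdisj : Disjoint (H.edgeFinset.filter (fun e => ∃ w ∈ X.erase v, w ∈ e))
      ((Finset.univ.filter (fun u => u ∉ X ∧ H.Adj v u)).image (fun u => s(v, u))) := by
    rw [Finset.disjoint_left]
    rintro e he he'
    simp only [mem_filter, mem_image, mem_univ, true_and, mem_erase] at he he'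
    obtain ⟨u, ⟨huX, hadj⟩, rfl⟩ := he'
    obtain ⟨-, w, ⟨hwv, hwX⟩, hw⟩ := he
    rw [Sym2.mem_iff] at hw
    rcases hw with rfl | rfl
    · exact hwv rfl
    · exact huX hwX
  have hinj : Set.InjOn (fun u => s(v, u))
      ((Finset.univ.filter (fun u => u ∉ X ∧ H.Adj v u)) : Set W) := by
    intro u1 h1 u2 h2 he
    simp only [Finset.coe_filter, Set.mem_setOf_eq] at h1 h2
    simp only [Sym2.eq, Sym2.rel_iff', Prod.mk.injEq, Prod.swap_prod_mk] at he
    rcases he with ⟨-, h⟩ | ⟨h, rfl⟩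
    · exact h
    · exact absurd rfl (h ▸ h1.2.2).ne'
  rw [inc, hB, Finset.card_union_of_disjoint hdisj, Finset.card_image_of_injOn hinj]
  rfl

lemma sum_le_inc (H : SimpleGraph W) (q : W) (s : W → ℤ)
    (hP : ∀ Y : Finset W, Y.Nonempty → q ∉ Y → ∃ v ∈ Y, s v + 1 ≤ outc H Y v) :
    ∀ X : Finset W, q ∉ X → ∑ v ∈ X, (s v + 1) ≤ (inc H X : ℤ) := by
  intro X
  induction X using Finset.strongInduction with
  | _ X ih =>
    intro hqX
    rcases X.eq_empty_or_nonempty with rfl | hne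
    · simp
    · obtain ⟨v, hvX, hv⟩ := hP X hne hqX
      have h1 := ih (X.erase v) (Finset.erase_ssubset hvX)
        (fun h => hqX (Finset.mem_of_mem_erase h))
      rw [← Finset.add_sum_erase _ _ hvX, inc_erase H hvX]
      push_cast
      omega

lemma exists_max (H : SimpleGraph W) (q : W) (s : W → ℤ)
    (hP : ∀ Y : Finset W, Y.Nonempty → q ∉ Y → ∃ v ∈ Y, s v + 1 ≤ outc H Y v) :
    ∀ X : Finset W, q ∉ X → (∀ v ∈ X, H.Adj v q) →
      ∃ s' : W → ℤ, (∀ v, v ∉ X → s' v = s v) ∧ (∀ v ∈ X, s v ≤ s' v) ∧ (∀ v ∈ X, 0 ≤ s' v) ∧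
        (∑ v ∈ X, (s' v + 1)) = (inc H X : ℤ) ∧
        (∀ Y : Finset W, Y.Nonempty → Y ⊆ X → ∃ v ∈ Y, s' v + 1 ≤ outc H Y v) := by
  intro X
  induction X using Finset.strongInduction with
  | _ X ih =>
    intro hqX hadj
    rcases X.eq_empty_or_nonempty with rfl | hne
    · refine ⟨s, fun v _ => rfl, by simp, by simp, by simp [inc], ?_⟩
      rintro Y ⟨y, hy⟩ hY
      exact absurd (hY hy) (Finset.notMem_empty y)
    · obtain ⟨v, hvX, hv⟩ := hP X hne hqX
      obtain ⟨s'', h0, h1, h2, h3, h4⟩ := ih (X.erase v) (Finset.erase_ssubset hvX)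
        (fun h => hqX (Finset.mem_of_mem_erase h))
        (fun u hu => hadj u (Finset.mem_of_mem_erase hu))
      have houtpos : 0 < outc H X v :=
        Finset.card_pos.mpr ⟨q, by simp [hqX, hadj v hvX]⟩
      refine ⟨Function.update s'' v ((outc H X v : ℤ) - 1), ?_, ?_, ?_, ?_, ?_⟩
      · intro u hu
        have hne' : u ≠ v := by rintro rfl; exact hu hvX
        rw [Function.update_of_ne hne', h0 u (fun h => hu (Finset.mem_of_mem_erase h))]
      · intro u hu
        by_cases huv : u = v
        · subst huv
          rw [Function.update_self]
          omega
        · rw [Function.update_of_ne huv]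
          exact h1 u (Finset.mem_erase.mpr ⟨huv, hu⟩)
      · intro u hu
        by_cases huv : u = v
        · subst huv
          rw [Function.update_self]
          omega
        · rw [Function.update_of_ne huv]
          exact h2 u (Finset.mem_erase.mpr ⟨huv, hu⟩)
      · rw [← Finset.add_sum_erase _ _ hvX, Function.update_self,
          Finset.sum_congr rfl (fun u hu => by
            rw [Function.update_of_ne (Finset.ne_of_mem_erase hu)]),
          h3, inc_erase H hvX]
        push_cast
        ring
      · intro Y hYne hYX
        by_cases hvY : v ∈ Y
        · refine ⟨v, hvY, ?_⟩
          rw [Function.update_self]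
          have := outc_mono H hYX v
          omega
        · obtain ⟨u, huY, hu⟩ := h4 Y hYne (Finset.subset_erase.mpr ⟨hYX, hvY⟩)
          have hne' : u ≠ v := by rintro rfl; exact hvY huY
          refine ⟨u, huY, ?_⟩
          rw [Function.update_of_ne hne']
          exact hu

end Aux


section KGfacts
variable [Fintype V]

lemma kg_adj_some_some {G : SimpleGraph V} {u v : V} :
    (KG G).Adj (some u) (some v) ↔ G.Adj u v := by
  constructor
  · exact fun h => h.2 u v rfl rfl
  · intro h
    refine ⟨by simpa using h.ne, ?_⟩
    intro a b ha hb
    injection ha with ha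
    injection hb with hb
    subst ha; subst hb
    exact h

lemma kg_adj_some_none {G : SimpleGraph V} (v : V) : (KG G).Adj (some v) none :=
  ⟨by simp, fun _ _ _ hb => by cases hb⟩

lemma kg_adj_none_iff {G : SimpleGraph V} {x : Option V} :
    (KG G).Adj none x ↔ x ≠ none := by
  constructor
  · exact fun h => h.1.symm
  · exact fun h => ⟨Ne.symm h, fun a b ha _ => by cases ha⟩

lemma edgeFinset_card_ncard {W : Type*} (H : SimpleGraph W) [Fintype H.edgeSet] :
    H.edgeFinset.card = H.edgeSet.ncard :=
  (Set.ncard_eq_toFinset_card' _).symm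

lemma kg_card_edge (G : SimpleGraph V) :
    (KG G).edgeSet.ncard = G.edgeSet.ncard + Fintype.card V := by
  have hdegn : (KG G).degree none = Fintype.card V := by
    have hnb : (KG G).neighborFinset none = Finset.univ.erase none := by
      ext x
      simp [SimpleGraph.mem_neighborFinset, kg_adj_none_iff]
    rw [SimpleGraph.degree, hnb, Finset.card_erase_of_mem (Finset.mem_univ _),
      Finset.card_univ, Fintype.card_option, Nat.add_sub_cancel]
  have hdegs : ∀ v : V, (KG G).degree (some v) = G.degree v + 1 := by
    intro v
    have hnb : (KG G).neighborFinset (some v)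
        = insert none ((G.neighborFinset v).image some) := by
      ext x
      cases x with
      | none => simp [SimpleGraph.mem_neighborFinset, kg_adj_some_none]
      | some u =>
        simp [SimpleGraph.mem_neighborFinset, kg_adj_some_some]
    rw [SimpleGraph.degree, hnb, Finset.card_insert_of_notMem (by simp),
      Finset.card_image_of_injective _ (Option.some_injective V)]
    rfl
  have h1 := SimpleGraph.sum_degrees_eq_twice_card_edges (KG G)
  have h2 := SimpleGraph.sum_degrees_eq_twice_card_edges G
  rw [Fintype.sum_option, hdegn] at h1
  simp only [hdegs, Finset.sum_add_distrib, Finset.sum_const, Finset.card_univ,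
    smul_eq_mul, mul_one, h2] at h1
  rw [← edgeFinset_card_ncard, ← edgeFinset_card_ncard]
  omega

lemma inc_full (G : SimpleGraph V) :
    inc (KG G) (Finset.univ.erase none) = (KG G).edgeSet.ncard := by
  have hall : ∀ e ∈ (KG G).edgeFinset, ∃ v ∈ Finset.univ.erase (none : Option V), v ∈ e := by
    intro e he
    induction e using Sym2.ind with
    | _ a b =>
      rw [SimpleGraph.mem_edgeFinset, SimpleGraph.mem_edgeSet] at he
      by_cases ha : a = none
      · subst ha
        exact ⟨b, Finset.mem_erase.mpr ⟨he.ne', Finset.mem_univ _⟩, Sym2.mem_mk_right _ _⟩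
      · exact ⟨a, Finset.mem_erase.mpr ⟨ha, Finset.mem_univ _⟩, Sym2.mem_mk_left _ _⟩
  rw [inc, ← edgeFinset_card_ncard]
  congr 1
  convert Finset.filter_true_of_mem hall

end KGfacts

/-- Every quasi-superstable divisor `c` on `G` satisfies `∑ v, c v ≤ |E| - |V|`,
with equality iff `c` is maximal with respect to the coordinatewise order among
quasi-superstable divisors. -/
theorem stmt11 {V : Type*} [Fintype V] (G : SimpleGraph V) [DecidableRel G.Adj]
    (hconn : G.Connected) (c : V → ℤ) (hc : QuasiSuperstable G c) :
    (∑ v, c v ≤ (G.edgeFinset.card : ℤ) - (Fintype.card V : ℤ)) ∧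
    ((∑ v, c v = (G.edgeFinset.card : ℤ) - (Fintype.card V : ℤ)) ↔
      ∀ c' : V → ℤ, QuasiSuperstable G c' → (∀ v, c v ≤ c' v) → c' = c) := by
  classical
  have hcard : (G.edgeFinset.card : ℤ) = (G.edgeSet.ncard : ℤ) := by
    exact_mod_cast edgeFinset_card_ncard G
  obtain ⟨hnn, hP⟩ := (superstable_iff (KG G) none
    (fun x => x.elim 0 (fun v => c v + 1))).mp hc
  set X : Finset (Option V) := Finset.univ.erase none with hX
  have hqX : (none : Option V) ∉ X := Finset.notMem_erase _ _
  have hincX : (inc (KG G) X : ℤ) = (G.edgeSet.ncard : ℤ) + (Fintype.card V : ℤ) := by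
    rw [hX, inc_full, kg_card_edge]
    push_cast
    ring
  have hsumX : ∀ t : V → ℤ,
      ∑ x ∈ X, ((fun x : Option V => x.elim 0 (fun v => t v + 1)) x + 1)
        = ∑ v, t v + 2 * (Fintype.card V : ℤ) := by
    intro t
    rw [hX, Finset.sum_erase_eq_sub (Finset.mem_univ _), Fintype.sum_option]
    simp only [Option.elim_none, Option.elim_some]
    rw [Finset.sum_add_distrib, Finset.sum_add_distrib, Finset.sum_const, Finset.card_univ]
    push_cast
    ring
  have hbound : ∀ t : V → ℤ, QuasiSuperstable G t →
      ∑ v, t v ≤ (G.edgeSet.ncard : ℤ) - (Fintype.card V : ℤ) := by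
    intro t ht
    obtain ⟨-, hPt⟩ := (superstable_iff (KG G) none
      (fun x => x.elim 0 (fun v => t v + 1))).mp ht
    have hb := sum_le_inc (KG G) none _ hPt X hqX
    rw [hsumX t, hincX] at hb
    linarith
  have hb := hbound c hc
  refine ⟨by rw [hcard]; linarith, ?_, ?_⟩
  · intro heq c' hc' hle
    have hb' := hbound c' hc'
    have hsum_le : ∑ v, c' v ≤ ∑ v, c v := by rw [hcard] at heq; linarith
    funext v
    by_contra hv
    have hlt : c v < c' v := lt_of_le_of_ne (hle v) (Ne.symm hv)
    have : ∑ u, c u < ∑ u, c' u :=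
      Finset.sum_lt_sum (fun i _ => hle i) ⟨v, Finset.mem_univ _, hlt⟩
    linarith
  · intro hmax
    have hadjq : ∀ x ∈ X, (KG G).Adj x none := by
      intro x hx
      rw [hX, Finset.mem_erase] at hx
      obtain ⟨v, rfl⟩ := Option.ne_none_iff_exists'.mp hx.1
      exact kg_adj_some_none v
    obtain ⟨hs0, hs1, hs2, hs3, hs4⟩ :=
      (exists_max (KG G) none (fun x => x.elim 0 (fun v => c v + 1)) hP X hqX hadjq).choose_spec
    set s' := (exists_max (KG G) none (fun x => x.elim 0 (fun v => c v + 1))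
      hP X hqX hadjq).choose with hs'def
    set c' : V → ℤ := fun v => s' (some v) - 1 with hc'def
    have hfun : (fun x : Option V => x.elim 0 (fun v => c' v + 1)) = s' := by
      funext x
      cases x with
      | none => simp [hs0 none hqX]
      | some v => simp [hc'def]
    have hq' : QuasiSuperstable G c' := by
      show Superstable (KG G) none (fun x : Option V => x.elim 0 (fun v => c' v + 1))
      rw [hfun, superstable_iff]
      refine ⟨?_, ?_⟩
      · intro v hv
        exact hs2 v (Finset.mem_erase.mpr ⟨hv, Finset.mem_univ _⟩)
      · intro Y hYne hqY
        exact hs4 Y hYne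
          (fun y hy => Finset.mem_erase.mpr ⟨fun h => hqY (h ▸ hy), Finset.mem_univ _⟩)
    have hle : ∀ v, c v ≤ c' v := by
      intro v
      have := hs1 (some v) (Finset.mem_erase.mpr ⟨by simp, Finset.mem_univ _⟩)
      simp only [Option.elim_some] at this
      have h2 : c' v = s' (some v) - 1 := rfl
      omega
    have hceq : c' = c := hmax c' hq' hle
    have hsum : ∑ x ∈ X, (s' x + 1) = (inc (KG G) X : ℤ) := hs3
    rw [← hfun, hsumX c', hincX, hceq] at hsum
    rw [hcard]
    linarith

end Soap
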